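/- arXiv:math/0301181 — 3 statements merged into one kernel-verified Lean document; each statement's English description precedes it below -/
import Mathlib

section
/- Let u be a continuous real-valued function on the closed unit disc Δ̄ ⊆ ℂ, let ũ be the solution of the Dirichlet problem on Δ with boundary values u|_{∂Δ}, and let C ≥ max(sup_{Δ̄}|u|) be a constant. Then the compact set K = {(z, w) ∈ Δ̄ × ℂ : ũ(z) ≤ Re w ≤ 3C, |Im w| ≤ C} is polynomially convex in ℂ². -/
open Metric Set
noncomputable section

def HarmonicOnSet (h : ℂ → ℝ) (U : Set ℂ) : Prop :=
  ∀ z ∈ U, ∃ r > 0, ball z r ⊆ U ∧ ∃ g : ℂ → ℂ,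
    DifferentiableOn ℂ g (ball z r) ∧ ∀ w ∈ ball z r, h w = (g w).re

def SubharmonicOnSet (φ : ℂ → EReal) (U : Set ℂ) : Prop :=
  UpperSemicontinuousOn φ U ∧
  ∀ (z : ℂ) (r : ℝ), 0 < r → closedBall z r ⊆ U →
    ∀ h : ℂ → ℝ, ContinuousOn h (closedBall z r) → HarmonicOnSet h (ball z r) →
      (∀ w ∈ sphere z r, φ w ≤ (h w : EReal)) → ∀ w ∈ ball z r, φ w ≤ (h w : EReal)

def PlurisubharmonicOn {n : ℕ} (φ : (Fin n → ℂ) → EReal) (U : Set (Fin n → ℂ)) : Prop :=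
  UpperSemicontinuousOn φ U ∧
  ∀ a b : Fin n → ℂ, SubharmonicOnSet (fun t => φ (a + t • b)) {t : ℂ | a + t • b ∈ U}

def Pluripolar {n : ℕ} (E : Set (Fin n → ℂ)) : Prop :=
  ∃ U : Set (Fin n → ℂ), IsOpen U ∧ E ⊆ U ∧
    ∃ φ : (Fin n → ℂ) → EReal, PlurisubharmonicOn φ U ∧
      (∀ z ∈ U, ∃ w ∈ connectedComponentIn U z, φ w ≠ ⊥) ∧
      E ⊆ {z | φ z = ⊥}

def PolarSet (E : Set ℂ) : Prop :=
  ∃ U : Set ℂ, IsOpen U ∧ E ⊆ U ∧ ∃ φ : ℂ → EReal,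
    SubharmonicOnSet φ U ∧ (∃ z ∈ U, φ z ≠ ⊥) ∧ E ⊆ {z | φ z = ⊥}

def polyHull {n : ℕ} (K : Set (Fin n → ℂ)) : Set (Fin n → ℂ) :=
  {z | ∀ P : MvPolynomial (Fin n) ℂ,
    ‖MvPolynomial.eval z P‖ ≤ ⨆ w ∈ K, ‖MvPolynomial.eval w P‖}

/-!
A point `p` of the hull satisfies `|F p| ≤ sup_K |F|` not only for polynomials but for every
uniform limit `F` of polynomials on a polydisc containing `K`; by Taylor expansion this includes
`F(z, w) = exp (g(z) + a w)` for `g` holomorphic near the closed unit disc. With `g = 0` and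
`a = 1, ±i` this gives `Re w ≤ 3C` and `|Im w| ≤ C` at `p`. Writing `ũ = Re G` with `G`
holomorphic on the disc, `g(z) = G(tz)` and `a = -1` give `ũ(t p₀) ≤ Re p₁ + ε` for `t < 1`
close to `1`, by uniform continuity of `ũ`; letting `ε → 0` gives `ũ(p₀) ≤ Re p₁`.
-/

namespace MvPolynomial

variable {n : ℕ} (D : Set (Fin n → ℂ))

def toContinuousMapOnAlgHom : MvPolynomial (Fin n) ℂ →ₐ[ℂ] C(D, ℂ) :=
  aeval fun i => ⟨fun q => q.1 i, (continuous_apply i).comp continuous_subtype_val⟩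

@[simp]
theorem toContinuousMapOnAlgHom_apply (P : MvPolynomial (Fin n) ℂ) (q : D) :
    toContinuousMapOnAlgHom D P q = eval q.1 P := by
  induction P using MvPolynomial.induction_on <;> simp_all [toContinuousMapOnAlgHom]

@[simp]
theorem eval_polynomial_aeval_X {σ R : Type*} [CommSemiring R] (q : σ → R) (i : σ)
    (P : Polynomial R) : eval q (Polynomial.aeval (X i) P) = P.eval (q i) := by
  simpa using (Polynomial.aeval_algHom_apply (aeval q) (X i) P).symm

end MvPolynomial

def polydisc {n : ℕ} (r : Fin n → ℝ) : Set (Fin n → ℂ) :=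
  univ.pi fun i => closedBall 0 (r i)

theorem isCompact_polydisc {n : ℕ} (r : Fin n → ℝ) : IsCompact (polydisc r) :=
  isCompact_univ_pi fun _ => isCompact_closedBall _ _

instance {n : ℕ} (r : Fin n → ℝ) : CompactSpace (polydisc r) :=
  isCompact_iff_compactSpace.mp (isCompact_polydisc r)

section PolynomialHull

variable {n : ℕ} {K : Set (Fin n → ℂ)} {p : Fin n → ℂ}

theorem norm_eval_le_of_mem_polyHull (hp : p ∈ polyHull K) (P : MvPolynomial (Fin n) ℂ)
    {S : ℝ} (hS : 0 ≤ S) (hPK : ∀ q ∈ K, ‖MvPolynomial.eval q P‖ ≤ S) :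
    ‖MvPolynomial.eval p P‖ ≤ S :=
  (hp P).trans (Real.iSup_le (fun q => Real.iSup_le (hPK q) hS) hS)

theorem mem_polydisc_of_mem_polyHull {r : Fin n → ℝ} (hr : 0 ≤ r) (hK : K ⊆ polydisc r)
    (hp : p ∈ polyHull K) : p ∈ polydisc r := fun i _ => by
  simpa using norm_eval_le_of_mem_polyHull hp (.X i) (hr i) fun q hq => by
    simpa using hK hq i trivial

theorem subset_polyHull (hK : Bornology.IsBounded K) : K ⊆ polyHull K := by
  intro q hq P
  obtain ⟨M, hM⟩ := hK.isCompact_closure.exists_bound_of_continuousOn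
    (MvPolynomial.continuous_eval P).continuousOn
  have hbdd : BddAbove (range fun w => ⨆ _ : w ∈ K, ‖MvPolynomial.eval w P‖) := by
    refine ⟨max M 0, forall_mem_range.2 fun w => Real.iSup_le (fun hw => ?_) (le_max_right _ _)⟩
    exact (hM w (subset_closure hw)).trans (le_max_left _ _)
  exact le_ciSup_of_le hbdd q (le_ciSup_of_le (by simp) hq le_rfl)

theorem norm_le_of_mem_polyHull_of_mem_topologicalClosure {D : Set (Fin n → ℂ)}
    [CompactSpace D] (hKD : K ⊆ D) {F : C(D, ℂ)}
    (hF : F ∈ (MvPolynomial.toContinuousMapOnAlgHom D).range.topologicalClosure)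
    {S : ℝ} (hS : 0 ≤ S) (hFK : ∀ q : D, q.1 ∈ K → ‖F q‖ ≤ S) (x : D)
    (hx : x.1 ∈ polyHull K) : ‖F x‖ ≤ S := by
  refine le_of_forall_pos_le_add fun ε hε => ?_
  rw [← SetLike.mem_coe, Subalgebra.topologicalClosure_coe, Metric.mem_closure_iff] at hF
  obtain ⟨_, ⟨P, rfl⟩, hP⟩ := hF (ε / 2) (half_pos hε)
  have hclose (q : D) : |‖F q‖ - ‖MvPolynomial.eval q.1 P‖| < ε / 2 := by
    refine (abs_norm_sub_norm_le _ _).trans_lt ?_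
    simpa [← dist_eq_norm] using (ContinuousMap.dist_apply_le_dist q).trans_lt hP
  have hPx : ‖MvPolynomial.eval x.1 P‖ ≤ S + ε / 2 :=
    norm_eval_le_of_mem_polyHull hx P (by positivity) fun q hq => by
      linarith [hFK ⟨q, hKD hq⟩ hq, (abs_lt.1 (hclose ⟨q, hKD hq⟩)).1]
  linarith [(abs_lt.1 (hclose x)).2]

end PolynomialHull

theorem exists_polynomial_norm_sub_lt {g : ℂ → ℂ} {s ρ : ℝ} (hs : 0 ≤ s) (hsρ : s < ρ)
    (hg : DifferentiableOn ℂ g (ball 0 ρ)) {ε : ℝ} (hε : 0 < ε) :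
    ∃ P : Polynomial ℂ, ∀ z ∈ closedBall (0 : ℂ) s, ‖P.eval z - g z‖ < ε := by
  set R : NNReal := ⟨(s + ρ) / 2, by linarith⟩
  have hsR : s < R := show s < (s + ρ) / 2 by linarith
  have hRρ : (R : ℝ) < ρ := show (s + ρ) / 2 < ρ by linarith
  have hg' := (hg.mono (closedBall_subset_ball hRρ)).hasFPowerSeriesOnBall (hs.trans_lt hsR)
  have hsub : closedBall (0 : ℂ) s ⊆ eball 0 R := by
    intro z hz
    rw [Metric.eball_coe]
    exact closedBall_subset_ball hsR hz
  have hU := (tendstoLocallyUniformlyOn_iff_forall_isCompact Metric.isOpen_eball).1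
    hg'.tendstoLocallyUniformlyOn _ hsub (isCompact_closedBall 0 s)
  obtain ⟨N, hN⟩ := (Metric.tendstoUniformlyOn_iff.1 hU ε hε).exists
  let p := cauchyPowerSeries g 0 R
  refine ⟨∑ k ∈ Finset.range N, Polynomial.C (p.coeff k) * Polynomial.X ^ k, fun z hz => ?_⟩
  have hpartial : (∑ k ∈ Finset.range N, Polynomial.C (p.coeff k) * Polynomial.X ^ k).eval z
      = p.partialSum N z := by
    rw [Polynomial.eval_finsetSum, FormalMultilinearSeries.partialSum]
    refine Finset.sum_congr rfl fun k _ => ?_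
    rw [p.apply_eq_pow_smul_coeff, smul_eq_mul, Polynomial.eval_mul, Polynomial.eval_C,
      Polynomial.eval_pow, Polynomial.eval_X, mul_comm]
  rw [hpartial, ← dist_eq_norm, dist_comm]
  simpa using hN z hz

section Polydisc

variable {n : ℕ} {r : Fin n → ℝ}

theorem exists_mem_topologicalClosure_comp_apply (i : Fin n) (hr : 0 ≤ r i) {g : ℂ → ℂ}
    {ρ : ℝ} (hρ : r i < ρ) (hg : DifferentiableOn ℂ g (ball 0 ρ)) :
    ∃ F ∈ (MvPolynomial.toContinuousMapOnAlgHom (polydisc r)).range.topologicalClosure,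
      ∀ q : polydisc r, F q = g (q.1 i) := by
  have hmem (q : polydisc r) : q.1 i ∈ closedBall 0 (r i) := q.2 i trivial
  have hgi : Continuous fun q : polydisc r => g (q.1 i) :=
    (hg.continuousOn.mono (closedBall_subset_ball hρ)).comp_continuous
      ((continuous_apply i).comp continuous_subtype_val) hmem
  refine ⟨⟨_, hgi⟩, ?_, fun _ => rfl⟩
  rw [← SetLike.mem_coe, Subalgebra.topologicalClosure_coe, Metric.mem_closure_iff]
  intro ε hε
  obtain ⟨P, hP⟩ := exists_polynomial_norm_sub_lt hr hρ hg hε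
  refine ⟨_, ⟨Polynomial.aeval (MvPolynomial.X i) P, rfl⟩, ?_⟩
  rw [ContinuousMap.dist_lt_iff hε]
  intro q
  rw [dist_comm, dist_eq_norm]
  simpa using hP _ (hmem q)

theorem sum_re_le_of_mem_polyHull {K : Set (Fin n → ℂ)} (hKr : K ⊆ polydisc r)
    {ρ : Fin n → ℝ} (hrρ : ∀ i, r i < ρ i) {g : Fin n → ℂ → ℂ}
    (hg : ∀ i, DifferentiableOn ℂ (g i) (ball 0 (ρ i))) {c : ℝ}
    (hgK : ∀ q ∈ K, ∑ i, (g i (q i)).re ≤ c) {p : Fin n → ℂ} (hp : p ∈ polyHull K)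
    (hpr : p ∈ polydisc r) : ∑ i, (g i (p i)).re ≤ c := by
  have hr (i : Fin n) : 0 ≤ r i := (norm_nonneg _).trans (by simpa using hpr i trivial)
  choose F hF hFg using fun i =>
    exists_mem_topologicalClosure_comp_apply i (hr i) (hrρ i) (hg i).cexp
  have hnorm (q : polydisc r) : ‖(∏ i, F i) q‖ = Real.exp (∑ i, (g i (q.1 i)).re) := by
    simp [ContinuousMap.prod_apply, hFg, Complex.norm_exp, Real.exp_sum]
  have hFK (q : polydisc r) (hq : q.1 ∈ K) : ‖(∏ i, F i) q‖ ≤ Real.exp c := by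
    rw [hnorm]
    exact Real.exp_le_exp.2 (hgK q hq)
  have := norm_le_of_mem_polyHull_of_mem_topologicalClosure hKr
    (Subalgebra.prod_mem _ fun i _ => hF i) (Real.exp_nonneg c) hFK ⟨p, hpr⟩ hp
  rwa [hnorm, Real.exp_le_exp] at this

end Polydisc

theorem HarmonicOnSet.harmonicOnNhd {u : ℂ → ℝ} {U : Set ℂ} (hu : HarmonicOnSet u U) :
    InnerProductSpace.HarmonicOnNhd u U := by
  intro z hz
  obtain ⟨r, hr, -, g, hg, hgu⟩ := hu z hz
  have hev : u =ᶠ[nhds z] fun w => (g w).re := Filter.eventually_of_mem (ball_mem_nhds z hr) hgu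
  exact (InnerProductSpace.harmonicAt_congr_nhds hev).2
    (hg.analyticAt (ball_mem_nhds z hr)).harmonicAt_re

theorem exists_lt_one_forall_abs_sub_lt {u : ℂ → ℝ} (hu : ContinuousOn u (closedBall 0 1))
    {ε : ℝ} (hε : 0 < ε) :
    ∃ t ∈ Ioo (0 : ℝ) 1, ∀ z ∈ closedBall (0 : ℂ) 1, |u (t * z) - u z| < ε := by
  obtain ⟨δ, hδ, hu⟩ := Metric.uniformContinuousOn_iff.1
    ((isCompact_closedBall 0 1).uniformContinuousOn_of_continuous hu) ε hε
  set t := max (1 / 2) (1 - δ / 2)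
  have ht0 : 0 < t := lt_max_of_lt_left (by norm_num)
  have ht1 : t < 1 := max_lt (by norm_num) (by linarith)
  refine ⟨t, ⟨ht0, ht1⟩, fun z hz => ?_⟩
  have hz1 : ‖z‖ ≤ 1 := mem_closedBall_zero_iff.1 hz
  have hnorm : ‖(t : ℂ) * z - z‖ = (1 - t) * ‖z‖ := by
    rw [← sub_one_mul, norm_mul, ← Complex.ofReal_one, ← Complex.ofReal_sub,
      Complex.norm_real, Real.norm_of_nonpos (by linarith), neg_sub]
  have htz : (t : ℂ) * z ∈ closedBall (0 : ℂ) 1 := by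
    rw [mem_closedBall_zero_iff, norm_mul, Complex.norm_real, Real.norm_of_nonneg ht0.le]
    nlinarith [norm_nonneg z]
  rw [← Real.dist_eq]
  refine hu _ htz z hz ?_
  rw [dist_eq_norm, hnorm]
  nlinarith [norm_nonneg z, le_max_right (1 / 2) (1 - δ / 2)]

section Bidisc

variable {K : Set (Fin 2 → ℂ)} {R : ℝ} {p : Fin 2 → ℂ}

theorem re_add_re_mul_le_of_mem_polyHull (hKR : K ⊆ polydisc ![1, R]) (hp : p ∈ polyHull K)
    (hpR : p ∈ polydisc ![1, R]) {g : ℂ → ℂ} {ρ : ℝ} (hρ : 1 < ρ)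
    (hg : DifferentiableOn ℂ g (ball 0 ρ)) (a : ℂ) {c : ℝ}
    (hK : ∀ q ∈ K, (g (q 0)).re + (a * q 1).re ≤ c) : (g (p 0)).re + (a * p 1).re ≤ c := by
  have hga : DifferentiableOn ℂ (a * ·) (ball 0 (R + 1)) :=
    (differentiable_id.const_mul a).differentiableOn
  simpa using sum_re_le_of_mem_polyHull (g := ![g, (a * ·)]) (ρ := ![ρ, R + 1]) hKR
    (by simp [Fin.forall_fin_two, hρ]) (by simp [Fin.forall_fin_two, hg, hga])
    (by simpa using hK) hp hpR

theorem le_re_of_mem_polyHull (hKR : K ⊆ polydisc ![1, R]) (hp : p ∈ polyHull K)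
    (hpR : p ∈ polydisc ![1, R]) {u : ℂ → ℝ} (hh : HarmonicOnSet u (ball 0 1))
    (hc : ContinuousOn u (closedBall 0 1)) (hK : ∀ q ∈ K, u (q 0) ≤ (q 1).re) :
    u (p 0) ≤ (p 1).re := by
  obtain ⟨G, hG, hGu⟩ := hh.harmonicOnNhd.exists_analyticOnNhd_ball_re_eq
  have hp0 : p 0 ∈ closedBall 0 1 := by simpa using hpR 0 trivial
  refine le_of_forall_pos_le_add fun ε hε => ?_
  obtain ⟨t, ⟨ht0, ht1⟩, hut⟩ := exists_lt_one_forall_abs_sub_lt hc (half_pos hε)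
  have hmaps : MapsTo (fun z : ℂ => (t : ℂ) * z) (ball 0 t⁻¹) (ball 0 1) := fun z hz => by
    rw [mem_ball_zero_iff, norm_mul, Complex.norm_real, Real.norm_of_nonneg ht0.le]
    calc t * ‖z‖ < t * t⁻¹ := by gcongr; exact mem_ball_zero_iff.1 hz
      _ = 1 := mul_inv_cancel₀ ht0.ne'
  have ht : 1 < t⁻¹ := (one_lt_inv₀ ht0).2 ht1
  have hre (z : ℂ) (hz : z ∈ closedBall 0 1) : (G (t * z)).re = u (t * z) :=
    hGu (hmaps (closedBall_subset_ball ht hz))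
  have h := re_add_re_mul_le_of_mem_polyHull hKR hp hpR ht
    (hG.differentiableOn.comp (differentiable_id.const_mul _).differentiableOn hmaps) (-1)
    (c := ε / 2) fun q hq => by
      have hq0 : q 0 ∈ closedBall 0 1 := by simpa using hKR hq 0 trivial
      simp only [Function.comp_apply, neg_one_mul, Complex.neg_re, hre _ hq0]
      linarith [(abs_lt.1 (hut _ hq0)).2, hK q hq]
  simp only [Function.comp_apply, neg_one_mul, Complex.neg_re, hre _ hp0] at h
  linarith [(abs_lt.1 (hut _ hp0)).1]

end Bidisc

theorem stmt11_general (utilde : ℂ → ℝ)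
    (hh : HarmonicOnSet utilde (ball (0 : ℂ) 1))
    (hc : ContinuousOn utilde (closedBall (0 : ℂ) 1))
    (C : ℝ)
    (K : Set (Fin 2 → ℂ))
    (hK : K = {q : Fin 2 → ℂ | q 0 ∈ closedBall (0 : ℂ) 1 ∧
      utilde (q 0) ≤ (q 1).re ∧ (q 1).re ≤ 3 * C ∧ |(q 1).im| ≤ C}) :
    polyHull K = K := by
  subst hK
  set K := {q : Fin 2 → ℂ | q 0 ∈ closedBall (0 : ℂ) 1 ∧
      utilde (q 0) ≤ (q 1).re ∧ (q 1).re ≤ 3 * C ∧ |(q 1).im| ≤ C}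
  obtain ⟨B, hB⟩ := (isCompact_closedBall (0 : ℂ) 1).exists_bound_of_continuousOn hc
  have hB0 : 0 ≤ B := (norm_nonneg _).trans (hB 0 (mem_closedBall_self zero_le_one))
  have hKR : K ⊆ polydisc ![1, B + 4 * |C|] := by
    rintro q ⟨hq0, hqu, hq3C, hqim⟩ i -
    fin_cases i
    · simpa using hq0
    · have hre : |(q 1).re| ≤ B + 3 * |C| := by
        rw [abs_le]
        constructor <;> linarith [(abs_le.1 (hB _ hq0)).1, le_abs_self C, abs_nonneg C]
      simpa using (Complex.norm_le_abs_re_add_abs_im (q 1)).trans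
        (by linarith [le_abs_self C] : |(q 1).re| + |(q 1).im| ≤ B + 4 * |C|)
  refine subset_antisymm (fun p hp => ?_)
    (subset_polyHull ((isCompact_polydisc _).isBounded.subset hKR))
  have hpR := mem_polydisc_of_mem_polyHull
    (by simp [Pi.le_def, Fin.forall_fin_two]; positivity) hKR hp
  have hbound (a : ℂ) (c : ℝ) (h : ∀ q ∈ K, (a * q 1).re ≤ c) : (a * p 1).re ≤ c := by
    simpa using re_add_re_mul_le_of_mem_polyHull hKR hp hpR one_lt_two
      (differentiableOn_const 0) a (by simpa using h)
  refine ⟨by simpa using hpR 0 trivial, le_re_of_mem_polyHull hKR hp hpR hh hc fun q hq => hq.2.1,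
    by simpa using hbound 1 (3 * C) fun q hq => by simpa using hq.2.2.1, abs_le.2 ⟨?_, ?_⟩⟩
  · have hIm := hbound Complex.I C fun q hq => by simpa [neg_le] using (abs_le.1 hq.2.2.2).1
    simpa [neg_le] using hIm
  · simpa using hbound (-Complex.I) C fun q hq => by simpa using (abs_le.1 hq.2.2.2).2

/-- Lemma 5: with ũ the Dirichlet solution on the unit disc with boundary values u, the
set K = {(z,w) ∈ Δ̄ × ℂ : ũ(z) ≤ Re w ≤ 3C, |Im w| ≤ C} is polynomially convex. -/
theorem stmt11 (u utilde : ℂ → ℝ)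
    (hu : ContinuousOn u (closedBall (0 : ℂ) 1))
    (hh : HarmonicOnSet utilde (ball (0 : ℂ) 1))
    (hc : ContinuousOn utilde (closedBall (0 : ℂ) 1))
    (hb : ∀ z ∈ sphere (0 : ℂ) 1, utilde z = u z)
    (C : ℝ) (hC : ∀ z ∈ closedBall (0 : ℂ) 1, |u z| ≤ C)
    (K : Set (Fin 2 → ℂ))
    (hK : K = {q : Fin 2 → ℂ | q 0 ∈ closedBall (0 : ℂ) 1 ∧
      utilde (q 0) ≤ (q 1).re ∧ (q 1).re ≤ 3 * C ∧ |(q 1).im| ≤ C}) :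
    polyHull K = K :=
  stmt11_general utilde hh hc C K hK
end
end

section
/- Let φ be a plurisubharmonic function on ℂ^{n+1} not identically -∞, and for a = (a₁,…,aₙ) ∈ ℂⁿ and 1 ≤ k ≤ n define φ_k^a(z_k, z_{n+1}) = φ(a₁,…,a_{k-1}, z_k, a_{k+1},…,aₙ, z_{n+1}) on ℂ². Then the set of points a ∈ ℂⁿ for which φ_k^a ≡ -∞ on ℂ² is a pluripolar subset of ℂⁿ. -/
open Metric Set
noncomputable section

lemma snoc_cont {n : ℕ} (c : ℂ) :
    Continuous fun a : Fin n → ℂ => (Fin.snoc a c : Fin (n + 1) → ℂ) := by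
  apply continuous_pi
  intro i
  refine Fin.lastCases ?_ ?_ i
  · simp only [Fin.snoc_last]; exact continuous_const
  · intro j; simp only [Fin.snoc_castSucc]; exact continuous_apply j

lemma snoc_line {n : ℕ} (a b : Fin n → ℂ) (c t : ℂ) :
    (Fin.snoc (a + t • b) c : Fin (n + 1) → ℂ)
      = Fin.snoc a c + t • (Fin.snoc b 0 : Fin (n + 1) → ℂ) := by
  funext i
  refine Fin.lastCases ?_ ?_ i
  · simp [Fin.snoc_last]
  · intro j; simp [Fin.snoc_castSucc]

/-- For a plurisubharmonic φ on ℂ^{n+1} not identically -∞, the set of a ∈ ℂⁿ for which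
the slice φ_k^a(z_k, z_{n+1}) is identically -∞ on ℂ² is pluripolar. -/
theorem stmt15 {n : ℕ} (φ : (Fin (n + 1) → ℂ) → EReal)
    (hφ : PlurisubharmonicOn φ Set.univ) (hφne : ∃ p, φ p ≠ ⊥) (k : Fin n) :
    Pluripolar {a : Fin n → ℂ |
      ∀ zk w : ℂ, φ (Fin.snoc (Function.update a k zk) w) = ⊥} := by
  obtain ⟨p, hp⟩ := hφne
  set c := p (Fin.last n) with hc
  refine ⟨Set.univ, isOpen_univ, subset_univ _,
    fun a => φ (Fin.snoc a c), ⟨?_, ?_⟩, ?_, ?_⟩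
  · -- upper semicontinuity
    intro x _ y hy
    have h1 : UpperSemicontinuousWithinAt φ Set.univ (Fin.snoc x c) :=
      hφ.1 _ (mem_univ _)
    have h2 := h1 y hy
    rw [nhdsWithin_univ] at h2 ⊢
    exact ((snoc_cont c).tendsto x).eventually h2
  · -- lines
    intro a b
    have hfun : (fun t : ℂ => φ (Fin.snoc (a + t • b) c))
        = fun t : ℂ => φ (Fin.snoc a c + t • (Fin.snoc b 0 : Fin (n + 1) → ℂ)) :=
      funext fun t => by rw [snoc_line]
    have H := hφ.2 (Fin.snoc a c) (Fin.snoc b 0)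
    simp only [mem_univ, setOf_true] at H ⊢
    rw [hfun]
    exact H
  · -- not identically ⊥
    intro z _
    refine ⟨fun i => p i.castSucc, ?_, ?_⟩
    · rw [connectedComponentIn_univ]
      have : connectedComponent z = Set.univ := by
        rw [PreconnectedSpace.connectedComponent_eq_univ]
      rw [this]; exact mem_univ _
    · have h : (Fin.snoc (fun i => p i.castSucc) c : Fin (n + 1) → ℂ) = p := by
        funext i
        refine Fin.lastCases ?_ ?_ i
        · simp [Fin.snoc_last, hc]
        · intro j; simp [Fin.snoc_castSucc]
      show φ (Fin.snoc (fun i => p i.castSucc) c) ≠ ⊥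
      rwa [h]
  · intro a ha
    have := ha (a k) c
    simpa using this
end
end

section
/- Let Ω be a domain in ℂⁿ and f : Ω → ℂ a continuous function such that for every k ∈ {1,…,n} and for a dense set of points a ∈ Ω, the one-variable function z_k ↦ f(a₁,…,a_{k-1}, z_k, a_{k+1},…,aₙ) is holomorphic on its domain. Then by continuity this holds for all a ∈ Ω in each variable, and hence f is holomorphic on Ω. -/
open Metric Set Topology Filter
noncomputable section

private lemma dist_update_le {n : ℕ} (a b : Fin n → ℂ) (k : Fin n) (z w : ℂ) :
    dist (Function.update b k z) (Function.update a k w) ≤ max (dist b a) (dist z w) := by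
  rw [dist_pi_le_iff (le_max_of_le_right dist_nonneg)]
  intro i
  rcases eq_or_ne i k with rfl | h
  · simpa using le_max_right (dist b a) (dist z w)
  · simp only [Function.update_of_ne h]
    exact le_max_of_le_left (dist_le_pi_dist b a i)

private lemma slice_tendsto {n : ℕ} {Ω : Set (Fin n → ℂ)} {f : (Fin n → ℂ) → ℂ}
    (hf : ContinuousOn f Ω) {a : Fin n → ℂ} (k : Fin n) {z₀ : ℂ} {R : ℝ} (hR : 0 < R)
    (hsub : closedBall (Function.update a k z₀) (3 * R) ⊆ Ω)
    {l : Filter (Fin n → ℂ)} (hl : l ≤ 𝓝 a) :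
    TendstoUniformlyOn (fun b z => f (Function.update b k z))
      (fun z => f (Function.update a k z)) l (ball z₀ (2 * R)) := by
  have hcomp : IsCompact (closedBall (Function.update a k z₀) (3 * R)) :=
    isCompact_closedBall _ _
  have huc := hcomp.uniformContinuousOn_of_continuous (hf.mono hsub)
  rw [Metric.tendstoUniformlyOn_iff]
  intro ε hε
  obtain ⟨δ, hδ, hδ'⟩ := Metric.uniformContinuousOn_iff.mp huc ε hε
  have hev : ∀ᶠ b in l, b ∈ ball a (min δ R) :=
    hl (Metric.ball_mem_nhds a (lt_min hδ hR))
  filter_upwards [hev] with b hb z hz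
  rw [mem_ball] at hb hz
  have hu : Function.update a k z ∈ closedBall (Function.update a k z₀) (3 * R) := by
    rw [mem_closedBall]
    refine le_trans (dist_update_le a a k z z₀) (max_le (by simp; positivity) (by linarith))
  have hw : Function.update b k z ∈ closedBall (Function.update a k z₀) (3 * R) := by
    rw [mem_closedBall]
    have h1 : dist b a ≤ 3 * R := le_trans hb.le (le_trans (min_le_right _ _) (by linarith))
    exact le_trans (dist_update_le a b k z z₀) (max_le h1 (by linarith))
  have hdist : dist (Function.update a k z) (Function.update b k z) < δ := by
    calc dist (Function.update a k z) (Function.update b k z)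
        ≤ max (dist a b) (dist z z) := dist_update_le b a k z z
      _ = dist b a := by rw [dist_self, dist_comm]; exact max_eq_left dist_nonneg
      _ < δ := lt_of_lt_of_le hb (min_le_left _ _)
  exact hδ' _ hu _ hw hdist

private lemma part1_lem {n : ℕ} {Ω : Set (Fin n → ℂ)} (hΩo : IsOpen Ω)
    {f : (Fin n → ℂ) → ℂ} (hf : ContinuousOn f Ω)
    (hd : ∀ k : Fin n, ∃ D : Set (Fin n → ℂ), D ⊆ Ω ∧ Ω ⊆ closure D ∧
      ∀ a ∈ D, DifferentiableOn ℂ (fun z : ℂ => f (Function.update a k z))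
        {z : ℂ | Function.update a k z ∈ Ω}) :
    ∀ a ∈ Ω, ∀ k : Fin n, DifferentiableOn ℂ (fun z : ℂ => f (Function.update a k z))
      {z : ℂ | Function.update a k z ∈ Ω} := by
  intro a ha k z₀ hz₀
  obtain ⟨D, hDΩ, hDd, hDdiff⟩ := hd k
  obtain ⟨ε, hε, hball⟩ := Metric.isOpen_iff.mp hΩo _ hz₀
  have hR : 0 < ε / 4 := by positivity
  have hsub : closedBall (Function.update a k z₀) (3 * (ε / 4)) ⊆ Ω :=
    (closedBall_subset_ball (by linarith)).trans hball
  have hne : (𝓝[D] a).NeBot := mem_closure_iff_nhdsWithin_neBot.mp (hDd ha)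
  have htu := slice_tendsto hf k hR hsub (nhdsWithin_le_nhds (s := D))
  have h1 : ∀ᶠ b in 𝓝[D] a, b ∈ ball a (ε / 4) :=
    nhdsWithin_le_nhds (Metric.ball_mem_nhds a hR)
  have hF : ∀ᶠ b in 𝓝[D] a, DifferentiableOn ℂ (fun z : ℂ => f (Function.update b k z))
      (ball z₀ (2 * (ε / 4))) := by
    filter_upwards [h1, self_mem_nhdsWithin] with b hb hbD
    refine (hDdiff b hbD).mono fun z hz => ?_
    refine hsub ?_
    rw [mem_closedBall]
    rw [mem_ball] at hb hz
    exact le_trans (dist_update_le a b k z z₀) (max_le (by linarith) (by linarith))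
  have hdo := htu.tendstoLocallyUniformlyOn.differentiableOn hF isOpen_ball
  exact (hdo.differentiableAt (isOpen_ball.mem_nhds (mem_ball_self (by positivity)))).differentiableWithinAt

private def pd {n : ℕ} (f : (Fin n → ℂ) → ℂ) (k : Fin n) (x : Fin n → ℂ) : ℂ :=
  deriv (fun z : ℂ => f (Function.update x k z)) (x k)

private lemma pcont_lem {n : ℕ} {Ω : Set (Fin n → ℂ)} (hΩo : IsOpen Ω)
    {f : (Fin n → ℂ) → ℂ} (hf : ContinuousOn f Ω)
    (part1 : ∀ a ∈ Ω, ∀ k : Fin n, DifferentiableOn ℂ (fun z : ℂ => f (Function.update a k z))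
      {z : ℂ | Function.update a k z ∈ Ω}) :
    ∀ a ∈ Ω, ∀ k : Fin n, Filter.Tendsto (pd f k) (𝓝 a) (𝓝 (pd f k a)) := by
  intro a ha k
  obtain ⟨ε, hε, hball⟩ := Metric.isOpen_iff.mp hΩo _ ha
  have hR : 0 < ε / 4 := by positivity
  have hsub : closedBall a (3 * (ε / 4)) ⊆ Ω :=
    (closedBall_subset_ball (by linarith)).trans hball
  have hsub' : closedBall (Function.update a k (a k)) (3 * (ε / 4)) ⊆ Ω := by
    rwa [Function.update_eq_self]
  set l := 𝓝[ball a (ε / 4)] a with hl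
  have hne : l.NeBot := nhdsWithin_neBot_of_mem (mem_ball_self hR)
  have htu := slice_tendsto hf k hR hsub' (nhdsWithin_le_nhds (s := ball a (ε / 4)))
  have hmemball : ∀ b ∈ ball a (ε / 4), ∀ z ∈ ball (a k) (2 * (ε / 4)),
      Function.update b k z ∈ Ω := by
    intro b hb z hz
    rw [mem_ball] at hb hz
    refine hsub ?_
    rw [mem_closedBall]
    calc dist (Function.update b k z) a
        = dist (Function.update b k z) (Function.update a k (a k)) := by
          rw [Function.update_eq_self]
      _ ≤ max (dist b a) (dist z (a k)) := dist_update_le a b k z (a k)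
      _ ≤ 3 * (ε / 4) := max_le (by linarith) (by linarith)
  have hF : ∀ᶠ b in l, DifferentiableOn ℂ (fun z : ℂ => f (Function.update b k z))
      (ball (a k) (2 * (ε / 4))) := by
    filter_upwards [self_mem_nhdsWithin] with b hb
    have hbΩ : b ∈ Ω := by
      have := hmemball b hb (b k) (mem_ball.2 (lt_of_le_of_lt (dist_le_pi_dist b a k)
        (lt_of_lt_of_le (mem_ball.1 hb) (by linarith))))
      rwa [Function.update_eq_self] at this
    exact (part1 b hbΩ k).mono fun z hz => hmemball b hb z hz
  have hg := htu.tendstoLocallyUniformlyOn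
  have hgd : DifferentiableOn ℂ (fun z : ℂ => f (Function.update a k z))
      (ball (a k) (2 * (ε / 4))) := hg.differentiableOn hF isOpen_ball
  have hderiv := hg.deriv hF isOpen_ball
  have hcont : ContinuousOn (deriv (fun z : ℂ => f (Function.update a k z)))
      (ball (a k) (2 * (ε / 4))) := ((hgd.analyticOnNhd isOpen_ball).deriv).continuousOn
  have hmem : a k ∈ ball (a k) (2 * (ε / 4)) := mem_ball_self (by positivity)
  have htt : Filter.Tendsto (fun b : Fin n → ℂ => b k) l (𝓝[ball (a k) (2 * (ε / 4))] (a k)) := by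
    rw [tendsto_nhdsWithin_iff]
    refine ⟨((continuous_apply k).tendsto a).mono_left nhdsWithin_le_nhds, ?_⟩
    filter_upwards [self_mem_nhdsWithin] with b hb
    exact mem_ball.2 (lt_of_le_of_lt (dist_le_pi_dist b a k)
      (lt_of_lt_of_le (mem_ball.1 hb) (by linarith)))
  have hfin := hderiv.tendsto_comp (hcont.continuousWithinAt hmem) hmem htt
  rw [← nhdsWithin_eq_nhds.2 (Metric.ball_mem_nhds a hR)]
  exact hfin

private lemma main_lem {n : ℕ} {Ω : Set (Fin n → ℂ)} (hΩo : IsOpen Ω)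
    {f : (Fin n → ℂ) → ℂ}
    (part1 : ∀ a ∈ Ω, ∀ k : Fin n, DifferentiableOn ℂ (fun z : ℂ => f (Function.update a k z))
      {z : ℂ | Function.update a k z ∈ Ω})
    (pcont : ∀ a ∈ Ω, ∀ k : Fin n, Filter.Tendsto (pd f k) (𝓝 a) (𝓝 (pd f k a)))
    {a : Fin n → ℂ} (ha : a ∈ Ω) :
    HasFDerivAt f (∑ k : Fin n, (pd f k a) •
      (ContinuousLinearMap.proj k : ((Fin n → ℂ)) →L[ℂ] ℂ)) a := by
  classical
  set L : (Fin n → ℂ) →L[ℂ] ℂ :=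
    ∑ k : Fin n, (pd f k a) • (ContinuousLinearMap.proj k : ((Fin n → ℂ)) →L[ℂ] ℂ) with hLdef
  have hLapp : ∀ v : Fin n → ℂ, L v = ∑ k : Fin n, pd f k a * v k := by
    intro v
    simp [hLdef, ContinuousLinearMap.sum_apply, smul_eq_mul]
  rw [hasFDerivAt_iff_isLittleO_nhds_zero, Asymptotics.isLittleO_iff]
  intro c hc
  obtain ⟨ε, hε, hball⟩ := Metric.isOpen_iff.mp hΩo _ ha
  have hR : 0 < ε / 4 := by positivity
  have hsub : closedBall a (3 * (ε / 4)) ⊆ Ω :=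
    (closedBall_subset_ball (by linarith)).trans hball
  set c' := c / (n + 1) with hc'def
  have hc'0 : 0 < c' := by positivity
  have hPk : ∀ᶠ y in 𝓝 a, ∀ k : Fin n, dist (pd f k y) (pd f k a) ≤ c' := by
    rw [Filter.eventually_all]
    intro k
    exact pcont a ha k (Metric.closedBall_mem_nhds (pd f k a) hc'0)
  obtain ⟨δ, hδ0, hδ⟩ := Metric.eventually_nhds_iff.mp hPk
  have hmin : 0 < min δ (ε / 4) := lt_min hδ0 hR
  filter_upwards [Metric.ball_mem_nhds (0 : Fin n → ℂ) hmin] with v hv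
  rw [mem_ball_zero_iff] at hv
  have hvδ : ‖v‖ < δ := lt_of_lt_of_le hv (min_le_left _ _)
  have hvR : ‖v‖ < ε / 4 := lt_of_lt_of_le hv (min_le_right _ _)
  -- telescoping points
  set x : ℕ → (Fin n → ℂ) := fun m i => if (i : ℕ) < m then a i + v i else a i with hxdef
  have hx0 : x 0 = a := funext fun i => by simp [hxdef]
  have hxn : x n = a + v := funext fun i => by simp [hxdef, i.isLt]
  have key : ∀ k : Fin n,
      ‖f (x ((k : ℕ) + 1)) - f (x (k : ℕ)) - pd f k a * v k‖ ≤ c' * ‖v k‖ := by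
    intro k
    set g : ℂ → ℂ := fun z => f (Function.update (x (k : ℕ)) k z) with hgdef
    have hxmk : x (k : ℕ) k = a k := by simp [hxdef]
    have hxm_eq : Function.update (x (k : ℕ)) k (a k) = x (k : ℕ) := by
      rw [← hxmk]; exact Function.update_eq_self k (x (k : ℕ))
    have hxsucc : x ((k : ℕ) + 1) = Function.update (x (k : ℕ)) k (a k + v k) := by
      funext i
      rcases eq_or_ne i k with rfl | hi
      · simp [hxdef]
      · have hi' : (i : ℕ) ≠ (k : ℕ) := fun h => hi (Fin.ext h)
        rw [Function.update_of_ne hi]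
        have hiff : ((i : ℕ) < (k : ℕ) + 1) ↔ ((i : ℕ) < (k : ℕ)) := by omega
        simp only [hxdef, hiff]
    set s : Set ℂ := closedBall (a k) ‖v‖ with hsdef
    have hmem : ∀ z ∈ s, Function.update (x (k : ℕ)) k z ∈ closedBall a ‖v‖ := by
      intro z hz
      rw [mem_closedBall] at hz ⊢
      have hxma : dist (x (k : ℕ)) a ≤ ‖v‖ := by
        rw [dist_pi_le_iff (norm_nonneg v)]
        intro i
        by_cases h : (i : ℕ) < (k : ℕ)
        · simp only [hxdef, if_pos h]
          simpa [dist_eq_norm] using norm_le_pi_norm v i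
        · simp [hxdef, if_neg h]
      calc dist (Function.update (x (k : ℕ)) k z) a
          = dist (Function.update (x (k : ℕ)) k z) (Function.update a k (a k)) := by
            rw [Function.update_eq_self]
        _ ≤ max (dist (x (k : ℕ)) a) (dist z (a k)) := dist_update_le a (x (k : ℕ)) k z (a k)
        _ ≤ ‖v‖ := max_le hxma hz
    have hmemΩ : ∀ z ∈ s, Function.update (x (k : ℕ)) k z ∈ Ω := fun z hz =>
      hsub (closedBall_subset_closedBall (by linarith) (hmem z hz))
    have hdiff : ∀ z ∈ s, DifferentiableAt ℂ g z := by
      intro z hz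
      set y := Function.update (x (k : ℕ)) k z with hydef
      have hyΩ : y ∈ Ω := hmemΩ z hz
      have hupd : ∀ w : ℂ, Function.update y k w = Function.update (x (k : ℕ)) k w := fun w =>
        Function.update_idem _ _ _
      have hgy : (fun w : ℂ => f (Function.update y k w)) = g := funext fun w => by
        rw [hupd w]
      have hzT : z ∈ {w : ℂ | Function.update y k w ∈ Ω} := by
        show Function.update y k z ∈ Ω
        rw [hupd z]; exact hyΩ
      have hT : IsOpen {w : ℂ | Function.update y k w ∈ Ω} :=
        hΩo.preimage (continuous_const.update k continuous_id)
      have := (part1 y hyΩ k).differentiableAt (hT.mem_nhds hzT)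
      rwa [hgy] at this
    set φ : ℂ →L[ℝ] ℂ :=
      (ContinuousLinearMap.smulRight (1 : ℂ →L[ℂ] ℂ) (pd f k a)).restrictScalars ℝ with hφdef
    set F' : ℂ → (ℂ →L[ℝ] ℂ) := fun z =>
      (ContinuousLinearMap.smulRight (1 : ℂ →L[ℂ] ℂ)
        (pd f k (Function.update (x (k : ℕ)) k z))).restrictScalars ℝ with hF'def
    have hfd : ∀ z ∈ s, HasFDerivWithinAt g (F' z) s z := by
      intro z hz
      have h1 : deriv g z = pd f k (Function.update (x (k : ℕ)) k z) := by
        show deriv g z = deriv (fun w : ℂ => f (Function.update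
          (Function.update (x (k : ℕ)) k z) k w)) ((Function.update (x (k : ℕ)) k z) k)
        rw [Function.update_self]
        congr 1
        funext w
        rw [Function.update_idem]
      have h2 := (hdiff z hz).hasDerivAt
      rw [h1] at h2
      exact (h2.hasFDerivAt.restrictScalars ℝ).hasFDerivWithinAt
    have hbound : ∀ z ∈ s, ‖F' z - φ‖ ≤ c' := by
      intro z hz
      have heq : F' z - φ = (ContinuousLinearMap.smulRight (1 : ℂ →L[ℂ] ℂ)
          (pd f k (Function.update (x (k : ℕ)) k z) - pd f k a)).restrictScalars ℝ := by
        ext w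
        simp [hF'def, hφdef, smul_sub, mul_sub]
      rw [heq, ContinuousLinearMap.norm_restrictScalars,
        ContinuousLinearMap.norm_smulRight_apply, ContinuousLinearMap.one_def,
        ContinuousLinearMap.norm_id, one_mul]
      have hy := hmem z hz
      rw [mem_closedBall] at hy
      have := hδ (lt_of_le_of_lt hy hvδ) k
      rwa [dist_eq_norm] at this
    have hmvt := Convex.norm_image_sub_le_of_norm_hasFDerivWithin_le' hfd hbound
      (convex_closedBall _ _) (mem_closedBall_self (norm_nonneg v))
      (show a k + v k ∈ s by
        rw [hsdef, mem_closedBall, dist_eq_norm, add_sub_cancel_left]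
        exact norm_le_pi_norm v k)
    have hga : g (a k) = f (x (k : ℕ)) := by rw [hgdef]; simp only; rw [hxm_eq]
    have hgb : g (a k + v k) = f (x ((k : ℕ) + 1)) := by rw [hgdef]; simp only; rw [← hxsucc]
    have hφv : φ ((a k + v k) - a k) = pd f k a * v k := by
      simp [hφdef, add_sub_cancel_left, smul_eq_mul, mul_comm]
    rw [hga, hgb, hφv, add_sub_cancel_left] at hmvt
    exact hmvt
  -- summing up
  have t1 : ∑ k : Fin n, (f (x ((k : ℕ) + 1)) - f (x (k : ℕ))) = f (x n) - f (x 0) := by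
    rw [Fin.sum_univ_eq_sum_range (fun m => f (x (m + 1)) - f (x m))]
    exact Finset.sum_range_sub (fun m => f (x m)) n
  have t3 : f (a + v) - f a - L v
      = ∑ k : Fin n, (f (x ((k : ℕ) + 1)) - f (x (k : ℕ)) - pd f k a * v k) := by
    rw [Finset.sum_sub_distrib, t1, hx0, hxn, hLapp]
  rw [t3]
  calc ‖∑ k : Fin n, (f (x ((k : ℕ) + 1)) - f (x (k : ℕ)) - pd f k a * v k)‖
      ≤ ∑ k : Fin n, ‖f (x ((k : ℕ) + 1)) - f (x (k : ℕ)) - pd f k a * v k‖ :=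
        norm_sum_le _ _
    _ ≤ ∑ k : Fin n, c' * ‖v‖ := by
        refine Finset.sum_le_sum fun k _ => le_trans (key k) ?_
        exact mul_le_mul_of_nonneg_left (norm_le_pi_norm v k) hc'0.le
    _ = (n : ℝ) * (c' * ‖v‖) := by
        rw [Finset.sum_const, Finset.card_univ, Fintype.card_fin, nsmul_eq_mul]
    _ ≤ c * ‖v‖ := by
        have h1 : (n : ℝ) * c' ≤ c := by
          rw [hc'def, mul_div_assoc']
          rw [div_le_iff₀ (by positivity : (0 : ℝ) < (n : ℝ) + 1)]
          nlinarith [hc.le, (Nat.cast_nonneg n : (0:ℝ) ≤ n)]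
        calc (n : ℝ) * (c' * ‖v‖) = ((n : ℝ) * c') * ‖v‖ := by ring
          _ ≤ c * ‖v‖ := mul_le_mul_of_nonneg_right h1 (norm_nonneg v)

/-- If a continuous function on a domain Ω ⊆ ℂⁿ is holomorphic in each variable
separately for a dense set of points, then it is separately holomorphic everywhere and
hence holomorphic (Hartogs). -/
theorem stmt16 {n : ℕ} (Ω : Set (Fin n → ℂ)) (hΩo : IsOpen Ω) (hΩc : IsConnected Ω)
    (f : (Fin n → ℂ) → ℂ) (hf : ContinuousOn f Ω)
    (hd : ∀ k : Fin n, ∃ D : Set (Fin n → ℂ), D ⊆ Ω ∧ Ω ⊆ closure D ∧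
      ∀ a ∈ D, DifferentiableOn ℂ (fun z : ℂ => f (Function.update a k z))
        {z : ℂ | Function.update a k z ∈ Ω}) :
    (∀ a ∈ Ω, ∀ k : Fin n, DifferentiableOn ℂ (fun z : ℂ => f (Function.update a k z))
      {z : ℂ | Function.update a k z ∈ Ω}) ∧ DifferentiableOn ℂ f Ω := by
  refine ⟨part1_lem hΩo hf hd, ?_⟩
  intro a ha
  exact ((main_lem hΩo (part1_lem hΩo hf hd)
    (pcont_lem hΩo hf (part1_lem hΩo hf hd)) ha).differentiableAt).differentiableWithinAt
end
end
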